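/- Let x be an element of the dihedral parabolic subgroup ⟨s,t⟩ ≤ W (with ⟨s,t⟩ finite of order 2m) other than its longest element y. Then the minimal number of letters one must delete from a given reduced expression of y to obtain a subword representing x is 1 if ℓ(x) and ℓ(y) have different parity, and 2 if they have the same parity (and x ≠ y). -/

import Mathlib

/-! The parity of the number of occurrences of `t` in the left inversion sequence of a word
depends only on the element `w` the word represents: it is read off the action of `w` on
`W × ZMod 2` lifted from the involutions `(u, e) ↦ (s u s, e + [u = s])`. It is `1` exactly when
`t` is a left inversion of `w`, which is the strong exchange condition for arbitrary words.

In `D = ⟨s_a, s_b⟩` every element of odd length is a reflection. If `ℓ x ≢ ℓ y`, then `x y⁻¹` is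
such a reflection and a left inversion of the longest element `y`, so deleting one letter
suffices, while deleting no letter gives `y ≠ x` and deleting one letter flips the parity. If
`ℓ x ≡ ℓ y` and `x ≠ y`, some reflection `t ∈ D` makes `t x` longer than `x`; otherwise every
reflection of `D` is a left inversion of both `x` and `y`, and the cocycle identity for the sign
forces `x = y`. Deleting one letter reaches `t x`, and deleting one more reaches `x`. -/

namespace CoxeterSystem

open List
open scoped Classical

variable {B W : Type*} [Group W] {M : CoxeterMatrix B} (cs : CoxeterSystem M W)

theorem signedConj_involutive (i : B) : Function.Involutive
    fun p : W × ZMod 2 => (cs.simple i * p.1 * cs.simple i,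
      p.2 + if p.1 = cs.simple i then 1 else 0) := by
  rintro ⟨w, e⟩
  have hconj : cs.simple i * w * cs.simple i = cs.simple i ↔ w = cs.simple i := by
    constructor
    · intro h; simpa [mul_assoc] using congr_arg (cs.simple i * · * cs.simple i) h
    · rintro rfl; simp
  ext
  · simp [mul_assoc]
  · simp only [hconj, add_assoc, CharTwo.add_self_eq_zero, add_zero]

noncomputable def signedConj (i : B) : Equiv.Perm (W × ZMod 2) :=
  (cs.signedConj_involutive i).toPerm

theorem signedConj_apply (i : B) (p : W × ZMod 2) :
    cs.signedConj i p = (cs.simple i * p.1 * cs.simple i,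
      p.2 + if p.1 = cs.simple i then 1 else 0) := rfl

theorem prod_map_signedConj_apply (ω : List B) (p : W × ZMod 2) :
    (ω.map cs.signedConj).prod p =
      (cs.wordProd ω * p.1 * (cs.wordProd ω)⁻¹,
        p.2 + (cs.leftInvSeq ω).count (cs.wordProd ω * p.1 * (cs.wordProd ω)⁻¹)) := by
  induction ω with
  | nil => simp
  | cons i ω ih =>
    have hlis : cs.leftInvSeq (i :: ω) =
        cs.simple i :: (cs.leftInvSeq ω).map (MulAut.conj (cs.simple i)) := rfl
    have hconj : cs.wordProd (i :: ω) * p.1 * (cs.wordProd (i :: ω))⁻¹ =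
        MulAut.conj (cs.simple i) (cs.wordProd ω * p.1 * (cs.wordProd ω)⁻¹) := by
      simp [wordProd_cons, mul_assoc]
    rw [map_cons, prod_cons, Equiv.Perm.mul_apply, ih, signedConj_apply, hlis, hconj, count_cons,
      count_map_of_injective _ _ (MulAut.conj (cs.simple i)).injective]
    ext
    · simp [mul_assoc]
    · simp [add_assoc, mul_eq_one_iff_eq_inv', inv_simple]

theorem prod_map_alternatingWord_two_mul {G : Type*} [Monoid G] (f : B → G) (i j : B) (m : ℕ) :
    ((alternatingWord i j (2 * m)).map f).prod = (f i * f j) ^ m := by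
  induction m with
  | zero => simp [alternatingWord]
  | succ m ih =>
    rw [show 2 * (m + 1) = 2 * m + 1 + 1 by ring, alternatingWord_succ', alternatingWord_succ']
    simp [ih, pow_succ', mul_assoc]

theorem leftInvSeq_alternatingWord_two_mul (i j : B) (m : ℕ) :
    cs.leftInvSeq (alternatingWord i j (2 * m)) =
      (range (2 * m)).map fun k => cs.simple i * (cs.simple j * cs.simple i) ^ k := by
  refine ext_getElem (by simp) fun k hk _ => ?_
  rw [getElem_leftInvSeq_alternatingWord cs i j m k (by simpa using hk), getElem_map,
    getElem_range, prod_alternatingWord_eq_mul_pow, show (2 * k + 1) / 2 = k by omega]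
  simp

theorem even_count_leftInvSeq_alternatingWord (i j : B) (w : W) :
    Even ((cs.leftInvSeq (alternatingWord i j (2 * M i j))).count w) := by
  have hperiodic : (fun k => cs.simple i * (cs.simple j * cs.simple i) ^ (M i j + k)) =
      fun k => cs.simple i * (cs.simple j * cs.simple i) ^ k := by
    simp [pow_add]
  rw [leftInvSeq_alternatingWord_two_mul, two_mul, range_add, map_append, map_map,
    Function.comp_def, hperiodic, count_append]
  exact Even.add_self _

theorem isLiftable_signedConj : M.IsLiftable cs.signedConj := by
  intro i j
  ext p : 1
  rw [← prod_map_alternatingWord_two_mul, prod_map_signedConj_apply,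
    prod_alternatingWord_eq_mul_pow]
  simp [(ZMod.natCast_eq_zero_iff_even).2 (cs.even_count_leftInvSeq_alternatingWord i j _)]

noncomputable def signedConjRep : W →* Equiv.Perm (W × ZMod 2) :=
  cs.lift ⟨cs.signedConj, cs.isLiftable_signedConj⟩

theorem signedConjRep_wordProd (ω : List B) :
    cs.signedConjRep (cs.wordProd ω) = (ω.map cs.signedConj).prod := by
  rw [wordProd, map_list_prod, map_map]
  congr 2
  exact funext (cs.lift_apply_simple cs.isLiftable_signedConj)

noncomputable def inversionSign (w t : W) : ZMod 2 := (cs.signedConjRep w (w⁻¹ * t * w, 0)).2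

theorem inversionSign_wordProd (ω : List B) (t : W) :
    cs.inversionSign (cs.wordProd ω) t = (cs.leftInvSeq ω).count t := by
  simp [inversionSign, signedConjRep_wordProd, prod_map_signedConj_apply, mul_assoc]

theorem signedConjRep_apply (w : W) (p : W × ZMod 2) :
    cs.signedConjRep w p = (w * p.1 * w⁻¹, p.2 + cs.inversionSign w (w * p.1 * w⁻¹)) := by
  obtain ⟨ω, rfl⟩ := cs.wordProd_surjective w
  rw [signedConjRep_wordProd, prod_map_signedConj_apply, inversionSign_wordProd]

theorem inversionSign_mul (g h t : W) :
    cs.inversionSign (g * h) t = cs.inversionSign g t + cs.inversionSign h (g⁻¹ * t * g) := by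
  have key : cs.signedConjRep (g * h) ((g * h)⁻¹ * t * (g * h), 0) =
      cs.signedConjRep g (cs.signedConjRep h ((g * h)⁻¹ * t * (g * h), 0)) := by
    rw [map_mul, Equiv.Perm.mul_apply]
  simp only [signedConjRep_apply] at key
  simpa [mul_assoc, add_comm] using congr_arg Prod.snd key

theorem inversionSign_simple_self (i : B) : cs.inversionSign (cs.simple i) (cs.simple i) = 1 := by
  simpa using cs.inversionSign_wordProd [i] (cs.simple i)

theorem inversionSign_one (t : W) : cs.inversionSign 1 t = 0 := by
  simpa using cs.inversionSign_wordProd [] t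

theorem IsReflection.inversionSign_self {t : W} (ht : cs.IsReflection t) :
    cs.inversionSign t t = 1 := by
  obtain ⟨u, i, rfl⟩ := ht
  have h₁ : u⁻¹ * (u * cs.simple i * u⁻¹) * u = cs.simple i := by group
  have h₂ : (u * cs.simple i)⁻¹ * (u * cs.simple i * u⁻¹) * (u * cs.simple i) =
      cs.simple i := by simp [mul_assoc]
  calc cs.inversionSign (u * cs.simple i * u⁻¹) (u * cs.simple i * u⁻¹)
      = cs.inversionSign u (u * cs.simple i * u⁻¹) + cs.inversionSign u⁻¹ (cs.simple i) +
          cs.inversionSign (cs.simple i) (cs.simple i) := by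
        rw [inversionSign_mul, inversionSign_mul, h₁, h₂]; ring
    _ = cs.inversionSign (u * u⁻¹) (u * cs.simple i * u⁻¹) + 1 := by
        rw [cs.inversionSign_mul u, h₁, inversionSign_simple_self]
    _ = 1 := by rw [mul_inv_cancel, inversionSign_one, zero_add]

theorem mem_leftInvSeq_of_inversionSign_eq_one {ω : List B} {t : W}
    (h : cs.inversionSign (cs.wordProd ω) t = 1) : t ∈ cs.leftInvSeq ω := by
  rw [inversionSign_wordProd] at h
  by_contra hnot
  simp [count_eq_zero_of_not_mem hnot] at h

theorem isLeftInversion_of_inversionSign_eq_one {w t : W} (h : cs.inversionSign w t = 1) :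
    cs.IsLeftInversion w t := by
  obtain ⟨ω, hω, rfl⟩ := cs.exists_isReduced w
  exact cs.isLeftInversion_of_mem_leftInvSeq hω (cs.mem_leftInvSeq_of_inversionSign_eq_one h)

theorem inversionSign_eq_one_iff (w t : W) :
    cs.inversionSign w t = 1 ↔ cs.IsLeftInversion w t := by
  refine ⟨cs.isLeftInversion_of_inversionSign_eq_one, fun ⟨ht, hlt⟩ => ?_⟩
  by_contra hne
  have hzero : cs.inversionSign w t = 0 := (by decide : ∀ e : ZMod 2, e ≠ 1 → e = 0) _ hne
  -- then `t` would be a left inversion of `t * w`, i.e. `ℓ w < ℓ (t * w)`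
  have : cs.IsLeftInversion (t * w) t := by
    apply cs.isLeftInversion_of_inversionSign_eq_one
    rw [inversionSign_mul, ht.inversionSign_self, ht.inv, ht.mul_self,
      one_mul, hzero, add_zero]
  have := this.2
  rw [← mul_assoc, ht.mul_self, one_mul] at this
  omega

theorem mem_leftInvSeq_of_isLeftInversion {ω : List B} {t : W}
    (h : cs.IsLeftInversion (cs.wordProd ω) t) : t ∈ cs.leftInvSeq ω :=
  cs.mem_leftInvSeq_of_inversionSign_eq_one ((cs.inversionSign_eq_one_iff _ _).2 h)

theorem exists_sublist_wordProd_eq_mul_of_isLeftInversion {ω : List B} {t : W}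
    (h : cs.IsLeftInversion (cs.wordProd ω) t) :
    ∃ ω' : List B, ω'.Sublist ω ∧ ω'.length + 1 = ω.length ∧
      cs.wordProd ω' = t * cs.wordProd ω := by
  obtain ⟨j, hj, rfl⟩ := List.mem_iff_getElem.mp (cs.mem_leftInvSeq_of_isLeftInversion h)
  rw [length_leftInvSeq] at hj
  refine ⟨ω.eraseIdx j, eraseIdx_sublist ω j, length_eraseIdx_add_one hj, ?_⟩
  rw [← getD_leftInvSeq_mul_wordProd, getD_eq_getElem]

theorem eq_of_forall_isLeftInversion {H : Subgroup W}
    (hH : ∀ z ∈ H, z ≠ 1 → ∃ t ∈ H, cs.IsLeftInversion z t) {x y : W}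
    (hx : x ∈ H) (hy : y ∈ H)
    (hxH : ∀ t ∈ H, cs.IsReflection t → cs.IsLeftInversion x t)
    (hyH : ∀ t ∈ H, cs.IsReflection t → cs.IsLeftInversion y t) : x = y := by
  by_contra hne
  have hz : y * x⁻¹ ∈ H := mul_mem hy (inv_mem hx)
  obtain ⟨t, htH, ht⟩ := hH _ hz (mul_inv_eq_one.not.2 (Ne.symm hne))
  have hconj : cs.IsLeftInversion x ((y * x⁻¹)⁻¹ * t * (y * x⁻¹)) :=
    hxH _ (mul_mem (mul_mem (inv_mem hz) htH) hz) (by simpa using ht.1.conj (y * x⁻¹)⁻¹)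
  -- the cocycle identity for `y = (y * x⁻¹) * x` reads `1 = 1 + 1` in `ZMod 2`
  have hsign := cs.inversionSign_mul (y * x⁻¹) x t
  rw [inv_mul_cancel_right, (cs.inversionSign_eq_one_iff _ _).2 (hyH t htH ht.1),
    (cs.inversionSign_eq_one_iff _ _).2 ht, (cs.inversionSign_eq_one_iff _ _).2 hconj] at hsign
  exact absurd hsign (by decide)

theorem length_wordProd_mod_two (ω : List B) : cs.length (cs.wordProd ω) % 2 = ω.length % 2 := by
  induction ω with
  | nil => simp
  | cons i ω ih =>
    rw [wordProd_cons, length_mul_mod_two, length_simple, length_cons]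
    omega

section Dihedral

variable (a b : B)

local notation "D" => Subgroup.closure {cs.simple a, cs.simple b}

theorem exists_zpow_of_mem_closure_pair {g : W} (hg : g ∈ D) : ∃ k : ℤ,
    g = (cs.simple a * cs.simple b) ^ k ∨ g = cs.simple a * (cs.simple a * cs.simple b) ^ k := by
  set r := cs.simple a * cs.simple b
  have hstep : ∀ x ∈ ({cs.simple a, cs.simple b} : Set W), ∀ y : W,
      (∃ k : ℤ, y = r ^ k ∨ y = cs.simple a * r ^ k) →
      ∃ k : ℤ, x * y = r ^ k ∨ x * y = cs.simple a * r ^ k := by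
    rintro x (rfl | rfl) y ⟨k, rfl | rfl⟩
    · exact ⟨k, Or.inr rfl⟩
    · exact ⟨k, Or.inl (cs.simple_mul_simple_cancel_left a)⟩
    · exact ⟨1 + k, Or.inr (by simp [r, zpow_one_add, ← mul_assoc])⟩
    · exact ⟨-1 + k, Or.inl (by simp [r, zpow_add, ← mul_assoc])⟩
  induction hg using Subgroup.closure_induction_left with
  | one => exact ⟨0, Or.inl (zpow_zero r).symm⟩
  | mul_left x hx y _ ih => exact hstep x hx y ih
  | inv_mul_cancel x hx y _ ih =>
    have hinv : x⁻¹ = x := by obtain rfl | rfl := hx <;> exact cs.inv_simple _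
    rw [hinv]
    exact hstep x hx y ih

theorem simple_mul_zpow_eq_zpow_neg_mul (k : ℤ) :
    cs.simple a * (cs.simple a * cs.simple b) ^ k =
      (cs.simple a * cs.simple b) ^ (-k) * cs.simple a := by
  have h : cs.simple a * (cs.simple a * cs.simple b) * (cs.simple a)⁻¹ =
      (cs.simple a * cs.simple b)⁻¹ := by simp
  rw [zpow_neg, ← inv_zpow, ← h, conj_zpow, inv_simple, mul_assoc, simple_mul_simple_self,
    mul_one]

theorem isReflection_simple_mul_zpow (k : ℤ) :
    cs.IsReflection (cs.simple a * (cs.simple a * cs.simple b) ^ k) := by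
  set r := cs.simple a * cs.simple b
  have hr : ∀ j : ℤ, r ^ (-j) * cs.simple a * (r ^ (-j))⁻¹ = cs.simple a * r ^ (j + j) := by
    intro j
    rw [← simple_mul_zpow_eq_zpow_neg_mul, zpow_neg, inv_inv, mul_assoc, ← zpow_add]
  obtain ⟨j, rfl | rfl⟩ := Int.even_or_odd' k
  · exact ⟨r ^ (-j), a, by rw [hr, two_mul]⟩
  · refine ⟨r ^ (-j), b, ?_⟩
    calc cs.simple a * r ^ (2 * j + 1) = cs.simple a * r ^ (j + j) * r := by
          rw [mul_assoc, ← zpow_add_one, two_mul]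
      _ = r ^ (-j) * cs.simple a * (r ^ (-j))⁻¹ * r := by rw [hr]
      _ = r ^ (-j) * (cs.simple a * r) * (r ^ (-j))⁻¹ := by group
      _ = r ^ (-j) * cs.simple b * (r ^ (-j))⁻¹ := by simp [r]

theorem length_zpow_mod_two (k : ℤ) : cs.length ((cs.simple a * cs.simple b) ^ k) % 2 = 0 := by
  have h : cs.lengthParity ((cs.simple a * cs.simple b) ^ k) = 1 := by
    rw [map_zpow, map_mul, lengthParity_simple, lengthParity_simple, ← ofAdd_add,
      show (1 + 1 : ZMod 2) = 0 by decide, ofAdd_zero, one_zpow]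
  rw [lengthParity_eq_ofAdd_length, ofAdd_eq_one, ZMod.natCast_eq_zero_iff_even] at h
  exact Nat.even_iff.mp h

theorem isReflection_of_mem_closure_pair {g : W} (hg : g ∈ D) (hodd : cs.length g % 2 = 1) :
    cs.IsReflection g := by
  obtain ⟨k, rfl | rfl⟩ := cs.exists_zpow_of_mem_closure_pair a b hg
  · have := cs.length_zpow_mod_two a b k
    omega
  · exact cs.isReflection_simple_mul_zpow a b k

theorem exists_isLeftInversion_of_mem_closure_pair {z : W} (hz : z ∈ D) (hz1 : z ≠ 1) :
    ∃ t ∈ D, cs.IsLeftInversion z t := by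
  have hpos : cs.length z ≠ 0 := cs.length_eq_zero_iff.not.2 hz1
  by_cases hodd : cs.length z % 2 = 1
  · have ht := cs.isReflection_of_mem_closure_pair a b hz hodd
    refine ⟨z, hz, ht, ?_⟩
    rw [ht.mul_self, length_one]
    omega
  · have hmem : cs.simple a * z⁻¹ ∈ D :=
      mul_mem (Subgroup.subset_closure (Set.mem_insert _ _)) (inv_mem hz)
    have hpar := cs.length_mul_mod_two (cs.simple a) z⁻¹
    rw [length_simple, length_inv] at hpar
    refine ⟨_, hmem, cs.isReflection_of_mem_closure_pair a b hmem (by omega), ?_⟩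
    rw [inv_mul_cancel_right, length_simple]
    omega

theorem exists_isReflection_length_lt_mul {x y : W} (hx : x ∈ D) (hy : y ∈ D)
    (hymax : ∀ v ∈ D, cs.length v ≤ cs.length y) (hxy : x ≠ y) :
    ∃ t ∈ D, cs.IsReflection t ∧ cs.length x < cs.length (t * x) := by
  by_contra! hx_max
  have hinv : ∀ w : W, (∀ t ∈ D, cs.IsReflection t → cs.length (t * w) ≤ cs.length w) →
      ∀ t ∈ D, cs.IsReflection t → cs.IsLeftInversion w t := fun w hw t htD ht =>
    ⟨ht, lt_of_le_of_ne (hw t htD ht) (ht.length_mul_right_ne w)⟩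
  exact hxy <| cs.eq_of_forall_isLeftInversion
    (fun _ => cs.exists_isLeftInversion_of_mem_closure_pair a b) hx hy (hinv x hx_max)
    (hinv y fun t htD _ => hymax _ (mul_mem htD hy))

theorem exists_sublist_wordProd_eq_of_length_mod_two_ne {y : W} (hy : y ∈ D)
    (hymax : ∀ v ∈ D, cs.length v ≤ cs.length y) {ω : List B} (hω : cs.wordProd ω = y)
    {u : W} (hu : u ∈ D) (hpar : cs.length u % 2 ≠ cs.length y % 2) :
    ∃ ω' : List B, ω'.Sublist ω ∧ ω'.length + 1 = ω.length ∧ cs.wordProd ω' = u := by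
  have hpar' := cs.length_mul_mod_two u y⁻¹
  rw [length_inv] at hpar'
  have ht : cs.IsLeftInversion y (u * y⁻¹) := by
    refine ⟨cs.isReflection_of_mem_closure_pair a b (mul_mem hu (inv_mem hy)) (by omega), ?_⟩
    rw [inv_mul_cancel_right]
    exact lt_of_le_of_ne (hymax u hu) fun h => hpar (by rw [h])
  subst hω
  simpa using cs.exists_sublist_wordProd_eq_mul_of_isLeftInversion ht

theorem exists_sublist_wordProd_eq_of_length_mod_two_eq {y : W} (hy : y ∈ D)
    (hymax : ∀ v ∈ D, cs.length v ≤ cs.length y) {ω : List B} (hω : cs.wordProd ω = y)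
    {x : W} (hx : x ∈ D) (hxy : x ≠ y) (hpar : cs.length x % 2 = cs.length y % 2) :
    ∃ ω' : List B, ω'.Sublist ω ∧ ω'.length + 2 = ω.length ∧ cs.wordProd ω' = x := by
  obtain ⟨t, htD, ht, hlt⟩ := cs.exists_isReflection_length_lt_mul a b hx hy hymax hxy
  have htt : t * (t * x) = x := by rw [← mul_assoc, ht.mul_self, one_mul]
  have hpar' := cs.length_mul_mod_two t x
  have hodd := Nat.odd_iff.mp ht.odd_length
  obtain ⟨ω₁, h₁, hlen₁, hω₁⟩ :=
    cs.exists_sublist_wordProd_eq_of_length_mod_two_ne a b hy hymax hω (mul_mem htD hx) (by omega)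
  obtain ⟨ω₂, h₂, hlen₂, hω₂⟩ := cs.exists_sublist_wordProd_eq_mul_of_isLeftInversion
    (show cs.IsLeftInversion (cs.wordProd ω₁) t from ⟨ht, by rwa [hω₁, htt]⟩)
  exact ⟨ω₂, h₂.trans h₁, by omega, by rw [hω₂, hω₁, htt]⟩

end Dihedral

end CoxeterSystem

theorem stmt_16_general {B W : Type*} [Group W] {M : CoxeterMatrix B}
    (cs : CoxeterSystem M W) (a b : B)
    (y : W) (hy : y ∈ Subgroup.closure {cs.simple a, cs.simple b})
    (hymax : ∀ v ∈ Subgroup.closure {cs.simple a, cs.simple b},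
      cs.length v ≤ cs.length y)
    (ω : List B) (hω : cs.wordProd ω = y)
    (x : W) (hx : x ∈ Subgroup.closure {cs.simple a, cs.simple b}) (hxy : x ≠ y) :
    sInf {l : ℕ | ∃ ω' : List B, ω'.Sublist ω ∧ ω'.length + l = ω.length ∧
        cs.wordProd ω' = x} =
      if cs.length x % 2 = cs.length y % 2 then 2 else 1 := by
  set S := {l : ℕ | ∃ ω' : List B, ω'.Sublist ω ∧ ω'.length + l = ω.length ∧
    cs.wordProd ω' = x}
  have hpos : ∀ l ∈ S, l ≠ 0 := by
    rintro _ ⟨ω', hsub, hlen, rfl⟩ rfl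
    exact hxy (by rw [hsub.eq_of_length hlen, hω])
  split_ifs with hpar
  · have hne_one : ∀ l ∈ S, l ≠ 1 := by
      rintro _ ⟨ω', -, hlen, rfl⟩ rfl
      have h' := cs.length_wordProd_mod_two ω'
      have h := cs.length_wordProd_mod_two ω
      rw [hω] at h
      omega
    refine IsLeast.csInf_eq ⟨?_, fun l hl => ?_⟩
    · exact cs.exists_sublist_wordProd_eq_of_length_mod_two_eq a b hy hymax hω hx hxy hpar
    · have := hpos l hl
      have := hne_one l hl
      omega
  · refine IsLeast.csInf_eq ⟨?_, fun l hl => Nat.one_le_iff_ne_zero.2 (hpos l hl)⟩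
    exact cs.exists_sublist_wordProd_eq_of_length_mod_two_ne a b hy hymax hω hx hpar

/-- Let `y` be the longest element of a finite dihedral parabolic subgroup
`⟨s,t⟩` of `W`, and let `ω` be a reduced expression for `y`.  For
`x ∈ ⟨s,t⟩` with `x ≠ y`, the minimal number of letters one must delete from
`ω` to obtain a subword representing `x` is `1` if `ℓ(x)` and `ℓ(y)` have
different parity, and `2` if they have the same parity. -/
theorem stmt_16 {B W : Type*} [Group W] {M : CoxeterMatrix B}
    (cs : CoxeterSystem M W) (a b : B)
    (hfin : (Subgroup.closure {cs.simple a, cs.simple b} : Set W).Finite)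
    (y : W) (hy : y ∈ Subgroup.closure {cs.simple a, cs.simple b})
    (hymax : ∀ v ∈ Subgroup.closure {cs.simple a, cs.simple b},
      cs.length v ≤ cs.length y)
    (ω : List B) (hred : cs.IsReduced ω) (hω : cs.wordProd ω = y)
    (x : W) (hx : x ∈ Subgroup.closure {cs.simple a, cs.simple b}) (hxy : x ≠ y) :
    sInf {l : ℕ | ∃ ω' : List B, ω'.Sublist ω ∧ ω'.length + l = ω.length ∧
        cs.wordProd ω' = x} =
      if cs.length x % 2 = cs.length y % 2 then 2 else 1 :=
  stmt_16_general cs a b y hy hymax ω hω x hx hxy
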